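/- Let G = (V,E) be a simple graph, A a nontrivial finite group, and H = {H_v}_{v∈V} with H_v = A for all v ∈ V. Then the map s : Aut_Graphs(G) → Aut_Part(M(G,H)) sending σ to M(σ, {id_A}_{v∈V}) is an injective group homomorphism and is a section of the homomorphism Ψ : Aut_Part(M(G,H)) → Aut_Graphs(G) (which sends f to the unique graph automorphism σ with f(H̃_v ∖ {∅}) ⊆ H̃_{σ(v)} for all v); in particular Ψ is surjective. Moreover Aut_Part(M(G,H)) is isomorphic to the semidirect product (∏_{v∈V} Aut(A)) ⋊ Aut_Graphs(G), where Aut_Graphs(G) acts on ∏_{v∈V} Aut(A) by permuting coordinates: σ · (f_v)_{v∈V} = (f_{σ⁻¹(v)})_{v∈V}. -/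

import Mathlib

set_option linter.unusedSectionVars false

open Monoid

namespace PaperPG

/-! ### Generic notions: letters, reduced / cyclically reduced words, reduced forms -/

section Letters

variable {ι : Type*} (H : ι → Type*) [∀ i, Group (H i)]

/-- A letter: a vertex/index together with an element of the corresponding group. -/
abbrev Ltr : Type _ := (i : ι) × H i

/-- A (combinatorially) reduced word: all letters are non-identity and adjacent letters
belong to distinct factors. -/
def IsRed (l : List (Ltr H)) : Prop :=
  (∀ x ∈ l, x.2 ≠ 1) ∧ l.Chain' fun a b => a.1 ≠ b.1

/-- A cyclically reduced word: reduced, and if it has length at least `2`, its first and last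
letters belong to distinct factors. -/
def IsCycRed (l : List (Ltr H)) : Prop :=
  IsRed H l ∧ ∀ a ∈ l.head?, ∀ b ∈ l.getLast?, 2 ≤ l.length → a.1 ≠ b.1

theorem isRed_nil : IsRed H ([] : List (Ltr H)) := by
  constructor <;> first | (simp; done) | exact List.IsChain.nil | (simp [List.Chain']; done)

theorem isCycRed_nil : IsCycRed H ([] : List (Ltr H)) := by
  refine ⟨isRed_nil H, ?_⟩
  simp

theorem isCycRed_single (x : Ltr H) (hx : x.2 ≠ 1) : IsCycRed H [x] := by
  refine ⟨⟨by simpa using hx, by first | (simp; done) | exact List.IsChain.singleton _ | (simp [List.Chain']; done)⟩, ?_⟩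
  simp

variable [DecidableEq ι] [∀ i, DecidableEq (H i)]

/-- The element of the free product `∗_{i} H i` determined by a word. -/
noncomputable def listProd (l : List (Ltr H)) : CoprodI H :=
  (l.map fun x => CoprodI.of x.2).prod

/-- The reduced form of a word: the unique reduced word representing the product of its
letters in the free product `∗_i H i`. -/
noncomputable def red (l : List (Ltr H)) : List (Ltr H) :=
  (CoprodI.Word.equiv (listProd H l)).toList

/-- The set of indices (vertices) occurring in a word. -/
def verts (l : List (Ltr H)) : Set ι := {i | ∃ x ∈ l, x.1 = i}

/-- The formal inverse of a word: invert every letter and reverse. -/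
def rawInv (l : List (Ltr H)) : List (Ltr H) :=
  (l.map fun x => (⟨x.1, x.2⁻¹⟩ : Ltr H)).reverse

end Letters

/-! ### Homomorphisms of (the underlying data of) partial groups -/

/-- `f` is a homomorphism of partial groups, from the partial group with domain `D₁` and
product `P₁` to the one with domain `D₂` and product `P₂`. -/
def IsHom {M N : Type*} (D₁ : Set (List M)) (P₁ : List M → M)
    (D₂ : Set (List N)) (P₂ : List N → N) (f : M → N) : Prop :=
  (∀ u ∈ D₁, u.map f ∈ D₂) ∧ ∀ u ∈ D₁, P₂ (u.map f) = f (P₁ u)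

theorem isHom_id {M : Type*} (D : Set (List M)) (P : List M → M) : IsHom D P D P id := by
  constructor <;> intro u hu <;> simp [hu]

theorem IsHom.comp {M₁ M₂ M₃ : Type*} {D₁ : Set (List M₁)} {P₁ : List M₁ → M₁}
    {D₂ : Set (List M₂)} {P₂ : List M₂ → M₂} {D₃ : Set (List M₃)} {P₃ : List M₃ → M₃}
    {g : M₂ → M₃} {f : M₁ → M₂} (hg : IsHom D₂ P₂ D₃ P₃ g) (hf : IsHom D₁ P₁ D₂ P₂ f) :
    IsHom D₁ P₁ D₃ P₃ (g ∘ f) := by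
  refine ⟨fun u hu => ?_, fun u hu => ?_⟩
  · rw [← List.map_map]
    exact hg.1 _ (hf.1 u hu)
  · rw [← List.map_map, hg.2 _ (hf.1 u hu), hf.2 u hu]
    rfl

/-! ### The partial group `M(G, H)` associated to a decorated graph -/

section Graph

variable {ι : Type*} (H : ι → Type*) [∀ i, Group (H i)]
  [DecidableEq ι] [∀ i, DecidableEq (H i)] (G : SimpleGraph ι)

/-- Membership in `M(G,H)`: a cyclically reduced word whose set of vertices is a clique. -/
def Mem (l : List (Ltr H)) : Prop := IsCycRed H l ∧ G.IsClique (verts H l)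

theorem mem_nil : Mem H G [] := by
  refine ⟨isCycRed_nil H, ?_⟩
  simp [verts, SimpleGraph.isClique_iff, Set.Pairwise]

theorem mem_single (v : ι) (h : H v) (hne : h ≠ 1) : Mem H G [⟨v, h⟩] := by
  refine ⟨isCycRed_single H _ hne, ?_⟩
  simp only [verts, SimpleGraph.isClique_iff, Set.Pairwise, List.mem_singleton]
  rintro a ⟨x, hx, rfl⟩ b ⟨y, hy, rfl⟩ hne'
  subst hx; subst hy
  exact absurd rfl hne'

/-- A word with letters elements of `M(G,H)` is in the domain `D(G,H)` iff all its letters are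
elements of `M(G,H)`, all occurring vertices lie in a common clique, and the reduced form of
any subproduct `u_i ⋯ u_j` is cyclically reduced. -/
def InD (W : List (List (Ltr H))) : Prop :=
  (∀ u ∈ W, Mem H G u) ∧
  G.IsClique {i | ∃ u ∈ W, i ∈ verts H u} ∧
  ∀ i j : ℕ, i ≤ j → j < W.length →
    IsCycRed H (red H (((W.drop i).take (j + 1 - i)).flatten))

/-- The underlying set of the partial group `M(G,H)`. -/
def Carrier : Type _ := {l : List (Ltr H) // Mem H G l}

/-- The domain of the partial group `M(G,H)`. -/
def pgD : Set (List (Carrier H G)) := {W | InD H G (W.map Subtype.val)}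

/-- The unit of the partial group `M(G,H)`: the empty word. -/
def one : Carrier H G := ⟨[], mem_nil H G⟩

/-- The product map of the partial group `M(G,H)`: the reduced form of the concatenation
(junk value `1` outside of the domain). -/
noncomputable def pgPi (W : List (Carrier H G)) : Carrier H G := by
  classical exact if h : Mem H G (red H (W.map Subtype.val).flatten) then ⟨_, h⟩ else one H G

/-- The inversion of the partial group `M(G,H)` (junk value `1` if the result were not a
member, which never happens). -/
noncomputable def invCar (x : Carrier H G) : Carrier H G := by
  classical exact if h : Mem H G (rawInv H x.val) then ⟨_, h⟩ else one H G

/-- The subset `H̃ᵥ` of `M(G,H)`: the empty word together with the one-letter words with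
letter a nontrivial element of `H v`. -/
def Htilde (v : ι) : Set (Carrier H G) :=
  {x | x.val = [] ∨ ∃ h : H v, h ≠ 1 ∧ x.val = [⟨v, h⟩]}

end Graph

/-! ### Induced maps -/

section Induced

variable {ι ι' : Type*} (H : ι → Type*) [∀ i, Group (H i)]
  [DecidableEq ι] [∀ i, DecidableEq (H i)] (G : SimpleGraph ι)
  (H' : ι' → Type*) [∀ i, Group (H' i)]
  [DecidableEq ι'] [∀ i, DecidableEq (H' i)] (G' : SimpleGraph ι')

/-- The letterwise map on words induced by a map of vertices `fG` and group homomorphisms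
`fH v : H v →* H' (fG v)`. -/
def rawInduced (fG : ι → ι') (fH : ∀ i, H i →* H' (fG i)) (l : List (Ltr H)) :
    List (Ltr H') :=
  l.map fun x => ⟨fG x.1, fH x.1 x.2⟩

/-- The map `M(f_G, {f_v}) : M(G,H) → M(G',H')` (junk value `1` if the image word were not a
member; this never happens when the `fH v` are injective). -/
noncomputable def inducedCar (fG : ι → ι') (fH : ∀ i, H i →* H' (fG i))
    (x : Carrier H G) : Carrier H' G' := by
  classical exact if h : Mem H' G' (rawInduced H H' fG fH x.val) then ⟨_, h⟩ else one H' G'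

/-- A homomorphism of partial groups `M(G,H) → M(G',H')` has torsion-free kernel if the only
element of finite order (as an element of the ambient free product) sent to `1` is `1`. -/
def TFKer (f : Carrier H G → Carrier H' G') : Prop :=
  ∀ x : Carrier H G, f x = one H' G' → IsOfFinOrder (listProd H x.val) → x = one H G

end Induced

/-! ### Automorphism groups -/

section Aut

variable {ι : Type*} (H : ι → Type*) [∀ i, Group (H i)]
  [DecidableEq ι] [∀ i, DecidableEq (H i)] (G : SimpleGraph ι)

/-- The automorphism group of the partial group `M(G,H)`, as a subgroup of the permutation
group of its carrier: bijections that are homomorphisms in both directions. -/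
noncomputable def pgAut : Subgroup (Equiv.Perm (Carrier H G)) where
  carrier := {f | IsHom (pgD H G) (pgPi H G) (pgD H G) (pgPi H G) f ∧
    IsHom (pgD H G) (pgPi H G) (pgD H G) (pgPi H G) f.symm}
  one_mem' := ⟨isHom_id _ _, isHom_id _ _⟩
  mul_mem' := by
    rintro f g ⟨hf, hf'⟩ ⟨hg, hg'⟩
    exact ⟨hf.comp hg, hg'.comp hf'⟩
  inv_mem' := by
    rintro f ⟨hf, hf'⟩
    exact ⟨hf', by first | exact hf | simpa [Equiv.Perm.inv_def] using hf⟩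

/-- The automorphism group of a simple graph, as a subgroup of the permutation group of its
vertices: bijections such that both the map and its inverse send edges to edges. -/
def graphAut : Subgroup (Equiv.Perm ι) where
  carrier := {σ | (∀ a b, G.Adj a b → G.Adj (σ a) (σ b)) ∧
    (∀ a b, G.Adj a b → G.Adj (σ.symm a) (σ.symm b))}
  one_mem' := ⟨fun a b h => h, fun a b h => h⟩
  mul_mem' := by
    rintro f g ⟨hf, hf'⟩ ⟨hg, hg'⟩
    exact ⟨fun a b h => hf _ _ (hg _ _ h), fun a b h => hg' _ _ (hf' _ _ h)⟩
  inv_mem' := by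
    rintro f ⟨hf, hf'⟩
    exact ⟨hf', by first | exact hf | simpa [Equiv.Perm.inv_def] using hf⟩

/-- An automorphism `f` of `M(G,H)` covers the vertex map `σ` if for every vertex `v`,
`f` sends the nontrivial elements of `H̃ᵥ` into `H̃_{σ v}`. -/
def CoversVia (f : Carrier H G → Carrier H G) (σ : ι → ι) : Prop :=
  ∀ (v : ι) (h : H v) (hne : h ≠ 1),
    ∃ h' : H (σ v), h' ≠ 1 ∧ (f ⟨[⟨v, h⟩], mem_single H G v h hne⟩).val = [⟨σ v, h'⟩]

end Aut

/-! ### Subgroups and locally finite subgroups of partial groups -/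

/-- A subset `N` is a subgroup of the partial group with data `(D, P, inv)`: it is closed
under inversion, every word with letters in `N` is in the domain `D`, and `P` maps such
words into `N`. -/
def IsSubgroupOf {M : Type*} (D : Set (List M)) (P : List M → M) (inv : M → M)
    (N : Set M) : Prop :=
  (∀ x ∈ N, inv x ∈ N) ∧ ∀ W : List M, (∀ u ∈ W, u ∈ N) → W ∈ D ∧ P W ∈ N

/-- A subgroup `N` of a partial group is locally finite: every finite subset of `N` is
contained in a finite subgroup contained in `N` (i.e. every finitely generated subgroup of the
group `N` is finite). -/
def IsLocFinSubgroupOf {M : Type*} (D : Set (List M)) (P : List M → M) (inv : M → M)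
    (N : Set M) : Prop :=
  IsSubgroupOf D P inv N ∧
    ∀ S : Set M, S ⊆ N → S.Finite →
      ∃ K : Set M, S ⊆ K ∧ K ⊆ N ∧ IsSubgroupOf D P inv K ∧ K.Finite

end PaperPG

namespace PaperPG

/-! ### Auxiliary lemmas about `red` -/

section RedLemmas
variable {ι : Type*} {H : ι → Type*} [∀ i, Group (H i)]
  [DecidableEq ι] [∀ i, DecidableEq (H i)]

/-- Build a `Word` from a reduced list. -/
def IsRed.toWord {l : List (Ltr H)} (h : IsRed H l) : CoprodI.Word H :=
  ⟨l, h.1, h.2⟩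

theorem listProd_toList (w : CoprodI.Word H) : listProd H w.toList = w.prod := rfl

theorem equiv_listProd_toList (w : CoprodI.Word H) :
    CoprodI.Word.equiv (listProd H w.toList) = w := by
  rw [listProd_toList]
  exact (CoprodI.Word.equiv (M := H)).apply_eq_iff_eq_symm_apply.mpr rfl

theorem red_of_isRed {l : List (Ltr H)} (h : IsRed H l) : red H l = l := by
  have := equiv_listProd_toList h.toWord
  simp only [red]
  rw [show l = h.toWord.toList from rfl, this]

theorem isRed_red (l : List (Ltr H)) : IsRed H (red H l) :=
  ⟨(CoprodI.Word.equiv (listProd H l)).ne_one, (CoprodI.Word.equiv (listProd H l)).chain_ne⟩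

theorem listProd_red (l : List (Ltr H)) : listProd H (red H l) = listProd H l := by
  have : listProd H (red H l) = (CoprodI.Word.equiv (listProd H l)).prod := rfl
  rw [this]
  exact (CoprodI.Word.equiv (M := H)).symm_apply_apply (listProd H l)

theorem red_eq_of_listProd_eq {l l' : List (Ltr H)} (h : listProd H l = listProd H l') :
    red H l = red H l' := by simp only [red, h]

theorem listProd_nil : listProd H ([] : List (Ltr H)) = 1 := rfl

theorem listProd_cons (x : Ltr H) (l : List (Ltr H)) :
    listProd H (x :: l) = CoprodI.of x.2 * listProd H l := by
  simp [listProd]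

theorem listProd_append (l l' : List (Ltr H)) :
    listProd H (l ++ l') = listProd H l * listProd H l' := by
  simp [listProd]

theorem red_nil : red H ([] : List (Ltr H)) = [] :=
  red_of_isRed (isRed_nil H)

theorem red_eq_nil_iff {l : List (Ltr H)} : red H l = [] ↔ listProd H l = 1 := by
  constructor
  · intro h
    have := listProd_red l
    rw [h] at this
    rw [← this, listProd_nil]
  · intro h
    have : red H l = red H [] := red_eq_of_listProd_eq (by rw [h, listProd_nil])
    rw [this, red_nil]

theorem red_single {i : ι} (g : H i) :
    red H [⟨i, g⟩] = if g = 1 then [] else [⟨i, g⟩] := by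
  split_ifs with h
  · subst h
    apply red_eq_nil_iff.mpr
    simp [listProd]
  · exact red_of_isRed ⟨by simpa using h, by simp [List.Chain']⟩

theorem equiv_of_mul (m : CoprodI H) {i : ι} (g : H i) :
    CoprodI.Word.equiv (CoprodI.of g * m) = CoprodI.of g • CoprodI.Word.equiv m := by
  have h1 : CoprodI.Word.equiv (CoprodI.of g * m)
      = (CoprodI.of g * m) • (CoprodI.Word.empty : CoprodI.Word H) := rfl
  have h2 : CoprodI.Word.equiv m = m • (CoprodI.Word.empty : CoprodI.Word H) := rfl
  rw [h1, h2, mul_smul]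

theorem verts_red_subset (l : List (Ltr H)) : verts H (red H l) ⊆ verts H l := by
  induction l with
  | nil => rw [red_nil]
  | cons x l ih =>
    intro i hi
    obtain ⟨y, hy, rfl⟩ := hi
    rw [red, listProd_cons, equiv_of_mul] at hy
    have hy' : (⟨y.1, y.2⟩ : Ltr H)
        ∈ (CoprodI.of x.2 • CoprodI.Word.equiv (listProd H l)).toList := by
      rwa [Sigma.eta]
    rcases CoprodI.Word.mem_smul_iff.mp hy' with ⟨hne, hmem⟩ | ⟨_, hij, _⟩
    · have : y.1 ∈ verts H (red H l) := ⟨⟨y.1, y.2⟩, hmem, rfl⟩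
      obtain ⟨z, hz, hz2⟩ := ih this
      exact ⟨z, List.mem_cons_of_mem _ hz, hz2⟩
    · exact ⟨x, List.mem_cons_self, hij.symm⟩

end RedLemmas
/-! ### verts and clique helpers -/

section VertsLemmas
variable {ι : Type*} {H : ι → Type*} [∀ i, Group (H i)]
  [DecidableEq ι] [∀ i, DecidableEq (H i)] {G : SimpleGraph ι}

theorem verts_append (l l' : List (Ltr H)) :
    verts H (l ++ l') = verts H l ∪ verts H l' := by
  ext i
  simp only [verts, List.mem_append, Set.mem_setOf_eq, Set.mem_union]
  constructor
  · rintro ⟨x, hx | hx, rfl⟩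
    · exact Or.inl ⟨x, hx, rfl⟩
    · exact Or.inr ⟨x, hx, rfl⟩
  · rintro (⟨x, hx, rfl⟩ | ⟨x, hx, rfl⟩)
    · exact ⟨x, Or.inl hx, rfl⟩
    · exact ⟨x, Or.inr hx, rfl⟩

theorem verts_flatten (L : List (List (Ltr H))) :
    verts H L.flatten = {i | ∃ u ∈ L, i ∈ verts H u} := by
  ext i
  simp only [verts, Set.mem_setOf_eq, List.mem_flatten]
  constructor
  · rintro ⟨x, ⟨u, hu, hxu⟩, rfl⟩
    exact ⟨u, hu, x, hxu, rfl⟩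
  · rintro ⟨u, hu, x, hxu, rfl⟩
    exact ⟨x, ⟨u, hu, hxu⟩, rfl⟩

theorem verts_sub_of_sublist {l l' : List (Ltr H)} (h : ∀ x ∈ l, x ∈ l') :
    verts H l ⊆ verts H l' := by
  rintro i ⟨x, hx, rfl⟩
  exact ⟨x, h x hx, rfl⟩

theorem isCycRed_ite {i : ι} (g : H i) :
    IsCycRed H (if g = 1 then [] else [⟨i, g⟩]) := by
  split_ifs with hg
  · exact isCycRed_nil H
  · exact isCycRed_single H _ (by simpa using hg)

end VertsLemmas

/-! ### pgD / pgPi computations -/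

section PgLemmas
variable {ι : Type*} {H : ι → Type*} [∀ i, Group (H i)]
  [DecidableEq ι] [∀ i, DecidableEq (H i)] {G : SimpleGraph ι}

theorem mem_red_of_inD {W : List (List (Ltr H))} (h : InD H G W) :
    Mem H G (red H W.flatten) := by
  constructor
  · rcases W with _ | ⟨a, t⟩
    · rw [show (List.flatten ([] : List (List (Ltr H)))) = [] from rfl, red_nil]
      exact isCycRed_nil H
    · have := h.2.2 0 t.length (Nat.zero_le _) (by simp)
      rw [List.drop_zero, Nat.sub_zero] at this
      rwa [show t.length + 1 = (a :: t).length from rfl, List.take_length] at this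
  · refine SimpleGraph.IsClique.subset ?_ h.2.1
    refine (verts_red_subset _).trans ?_
    rw [verts_flatten]

theorem pgPi_val {W : List (Carrier H G)} (h : W ∈ pgD H G) :
    (pgPi H G W).val = red H (W.map Subtype.val).flatten := by
  erw [pgPi, dif_pos (mem_red_of_inD h)]

theorem pgD_nil : ([] : List (Carrier H G)) ∈ pgD H G := by
  show InD H G ([] : List (List (Ltr H)))
  refine ⟨by simp, ?_, by simp⟩
  convert G.isClique_empty using 1
  simp

theorem pgPi_nil : pgPi H G ([] : List (Carrier H G)) = one H G := by
  apply Subtype.ext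
  rw [pgPi_val pgD_nil]
  exact red_nil

theorem inD_single (x : Carrier H G) : [x] ∈ pgD H G := by
  show InD H G [x.val]
  refine ⟨by simpa using x.2, ?_, ?_⟩
  · have : {i | ∃ u ∈ [x.val], i ∈ verts H u} = verts H x.val := by
      ext i; simp
    rw [this]
    exact x.2.2
  · intro i j hij hj
    simp only [List.length_singleton] at hj
    interval_cases j
    interval_cases i
    simp only [List.drop_zero, List.take_succ_cons, Nat.sub_zero]
    rw [show ((x.val :: List.take 0 ([] : List (List (Ltr H)))).flatten) = x.val by simp,
      red_of_isRed x.2.1.1]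
    exact x.2.1

theorem pgPi_single (x : Carrier H G) : pgPi H G [x] = x := by
  apply Subtype.ext
  rw [pgPi_val (inD_single x)]
  show red H ([x.val] : List (List (Ltr H))).flatten = x.val
  rw [show ([x.val] : List (List (Ltr H))).flatten = x.val by simp,
    red_of_isRed x.2.1.1]

theorem vertSet_pair (x y : Carrier H G) :
    {i | ∃ u ∈ [x.val, y.val], i ∈ verts H u} = verts H (x.val ++ y.val) := by
  rw [verts_append]
  ext i; simp [Set.mem_union]

theorem inD_pair (x y : Carrier H G) (h : IsCycRed H (red H (x.val ++ y.val)))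
    (hcl : G.IsClique (verts H (x.val ++ y.val))) : [x, y] ∈ pgD H G := by
  show InD H G [x.val, y.val]
  refine ⟨by simp [x.2, y.2], by rwa [vertSet_pair], ?_⟩
  intro i j hij hj
  have hj2 : j < 2 := by simpa using hj
  clear hj
  interval_cases j <;> interval_cases i
  · simpa [red_of_isRed x.2.1.1] using x.2.1
  · simpa using h
  · simpa [red_of_isRed y.2.1.1] using y.2.1

theorem pgPi_pair_val (x y : Carrier H G) (h : IsCycRed H (red H (x.val ++ y.val)))
    (hcl : G.IsClique (verts H (x.val ++ y.val))) :
    (pgPi H G [x, y]).val = red H (x.val ++ y.val) := by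
  rw [pgPi_val (inD_pair x y h hcl)]
  show red H ([x.val, y.val] : List (List (Ltr H))).flatten = _
  congr 1
  simp

end PgLemmas
/-! ### Replicates and powers -/

section ReplLemmas
variable {ι : Type*} {H : ι → Type*} [∀ i, Group (H i)]
  [DecidableEq ι] [∀ i, DecidableEq (H i)] {G : SimpleGraph ι}

theorem flatten_replicate_single (n : ℕ) (a : Ltr H) :
    (List.replicate n ([a] : List (Ltr H))).flatten = List.replicate n a := by
  induction n with
  | zero => rfl
  | succ n ih => simp [List.replicate_succ, ih]

theorem listProd_replicate (n : ℕ) {i : ι} (h : H i) :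
    listProd H (List.replicate n (⟨i, h⟩ : Ltr H)) = CoprodI.of (h ^ n) := by
  induction n with
  | zero => simp [listProd_nil]
  | succ n ih =>
    rw [List.replicate_succ, listProd_cons, ih, ← map_mul, pow_succ']

theorem red_replicate (n : ℕ) {i : ι} (h : H i) :
    red H (List.replicate n (⟨i, h⟩ : Ltr H))
      = if h ^ n = 1 then [] else [⟨i, h ^ n⟩] := by
  rw [red_eq_of_listProd_eq (l' := [⟨i, h ^ n⟩])
    (by rw [listProd_replicate]; simp [listProd]), red_single]

theorem inD_replicate (v : ι) (h : H v) (hne : h ≠ 1) (n : ℕ) :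
    List.replicate n (⟨[⟨v, h⟩], mem_single H G v h hne⟩ : Carrier H G) ∈ pgD H G := by
  show InD H G (List.map Subtype.val _)
  rw [List.map_replicate]
  refine ⟨?_, ?_, ?_⟩
  · intro u hu
    rw [List.eq_of_mem_replicate hu]
    exact mem_single H G v h hne
  · intro a ha b hb hab
    exfalso
    apply hab
    obtain ⟨u, hu, x, hx, rfl⟩ := ha
    obtain ⟨u', hu', y, hy, hy2⟩ := hb
    rw [List.eq_of_mem_replicate hu] at hx
    rw [List.eq_of_mem_replicate hu'] at hy
    simp only [List.mem_singleton] at hx hy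
    rw [hx, ← hy2, hy]
  · intro i j hij hj
    rw [List.drop_replicate, List.take_replicate, flatten_replicate_single,
      red_replicate]
    exact isCycRed_ite _

theorem pgPi_replicate_eq_one (v : ι) (h : H v) (hne : h ≠ 1) {n : ℕ}
    (hn : h ^ n = 1) :
    pgPi H G (List.replicate n (⟨[⟨v, h⟩], mem_single H G v h hne⟩ : Carrier H G))
      = one H G := by
  apply Subtype.ext
  erw [pgPi_val (inD_replicate v h hne n), List.map_replicate,
    flatten_replicate_single, red_replicate, if_pos hn]
  rfl

theorem isRed_append {l₁ l₂ : List (Ltr H)} (h1 : IsRed H l₁) (h2 : IsRed H l₂)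
    (hb : ∀ x ∈ l₁.getLast?, ∀ y ∈ l₂.head?, x.1 ≠ y.1) : IsRed H (l₁ ++ l₂) := by
  constructor
  · intro x hx
    rcases List.mem_append.mp hx with hx | hx
    · exact h1.1 x hx
    · exact h2.1 x hx
  · rw [List.Chain', List.isChain_append]
    exact ⟨h1.2, h2.2, hb⟩

theorem head?_flatten_replicate {l : List (Ltr H)} (hl : l ≠ []) (n : ℕ) (hn : n ≠ 0) :
    ((List.replicate n l).flatten).head? = l.head? := by
  obtain ⟨k, rfl⟩ := Nat.exists_eq_succ_of_ne_zero hn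
  rw [List.replicate_succ, List.flatten_cons, List.head?_append,
    List.head?_eq_head hl]
  rfl

theorem isRed_flatten_replicate {l : List (Ltr H)} (hcyc : IsCycRed H l)
    (hlen : 2 ≤ l.length) (n : ℕ) : IsRed H ((List.replicate n l).flatten) := by
  induction n with
  | zero => exact isRed_nil H
  | succ n ih =>
    rw [List.replicate_succ, List.flatten_cons]
    refine isRed_append hcyc.1 ih ?_
    intro x hx y hy
    rcases Nat.eq_zero_or_pos n with rfl | hn
    · simp at hy
    · rw [head?_flatten_replicate (by intro h; rw [h] at hlen; simp at hlen) n
        (Nat.pos_iff_ne_zero.mp hn)] at hy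
      exact (hcyc.2 y hy x hx hlen).symm

end ReplLemmas
/-! ### Constant family: letterwise relabelling maps -/

section Const
variable {ι : Type*} [DecidableEq ι] {G : SimpleGraph ι}
  {A : Type*} [Group A] [DecidableEq A]

/-- The letter relabelling map. -/
def lmap (σ : Equiv.Perm ι) (β : ι → MulAut A) (x : Ltr (fun _ : ι => A)) :
    Ltr (fun _ : ι => A) :=
  ⟨σ x.1, β (σ x.1) x.2⟩

/-- The word relabelling map. -/
def wmap (σ : Equiv.Perm ι) (β : ι → MulAut A) (l : List (Ltr (fun _ : ι => A))) :
    List (Ltr (fun _ : ι => A)) :=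
  l.map (lmap σ β)

theorem lmap_lmap (σ σ' : Equiv.Perm ι) (β β' : ι → MulAut A)
    (x : Ltr (fun _ : ι => A)) :
    lmap σ β (lmap σ' β' x) = lmap (σ * σ') (fun v => β v * β' (σ⁻¹ v)) x := by
  simp only [lmap, Equiv.Perm.mul_apply, MulAut.mul_apply, Equiv.Perm.inv_def, Equiv.symm_apply_apply]

theorem lmap_one (x : Ltr (fun _ : ι => A)) : lmap 1 (fun _ => 1) x = x := rfl

theorem wmap_wmap (σ σ' : Equiv.Perm ι) (β β' : ι → MulAut A)
    (l : List (Ltr (fun _ : ι => A))) :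
    wmap σ β (wmap σ' β' l) = wmap (σ * σ') (fun v => β v * β' (σ⁻¹ v)) l := by
  simp only [wmap, List.map_map]
  exact List.map_congr_left fun x _ => lmap_lmap σ σ' β β' x

theorem wmap_one (l : List (Ltr (fun _ : ι => A))) : wmap 1 (fun _ => 1) l = l := by
  rw [wmap]
  conv_rhs => rw [← List.map_id l]
  exact List.map_congr_left fun x _ => lmap_one x

/-- The induced endomorphism of the free product. -/
noncomputable def cmap (σ : Equiv.Perm ι) (β : ι → MulAut A) :
    CoprodI (fun _ : ι => A) →* CoprodI (fun _ : ι => A) :=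
  CoprodI.lift fun i => (CoprodI.of (M := fun _ : ι => A) (i := σ i)).comp
    (β (σ i) : A →* A)

theorem cmap_listProd (σ : Equiv.Perm ι) (β : ι → MulAut A)
    (l : List (Ltr (fun _ : ι => A))) :
    cmap σ β (listProd (fun _ : ι => A) l) = listProd (fun _ : ι => A) (wmap σ β l) := by
  induction l with
  | nil => simp [listProd_nil, wmap]
  | cons x l ih =>
    simp only [wmap, List.map_cons] at ih ⊢
    rw [listProd_cons, map_mul, ih, listProd_cons]
    congr 1

theorem isRed_wmap (σ : Equiv.Perm ι) (β : ι → MulAut A)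
    {l : List (Ltr (fun _ : ι => A))} (h : IsRed (fun _ : ι => A) l) :
    IsRed (fun _ : ι => A) (wmap σ β l) := by
  constructor
  · intro x hx
    obtain ⟨y, hy, rfl⟩ := List.mem_map.mp hx
    simp only [lmap, ne_eq]
    intro hx1
    exact h.1 y hy (by simpa using (β (σ y.1)).injective (by simpa using hx1))
  · rw [wmap, List.Chain', List.isChain_map]
    exact h.2.imp fun {a b} hab => fun hc => hab (σ.injective hc)

theorem isCycRed_wmap (σ : Equiv.Perm ι) (β : ι → MulAut A)
    {l : List (Ltr (fun _ : ι => A))} (h : IsCycRed (fun _ : ι => A) l) :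
    IsCycRed (fun _ : ι => A) (wmap σ β l) := by
  refine ⟨isRed_wmap σ β h.1, ?_⟩
  intro a ha b hb hlen
  rw [wmap, List.head?_map, Option.mem_def, Option.map_eq_some_iff] at ha
  rw [wmap, List.getLast?_map, Option.mem_def, Option.map_eq_some_iff] at hb
  obtain ⟨a', ha', rfl⟩ := ha
  obtain ⟨b', hb', rfl⟩ := hb
  have hlen' : 2 ≤ l.length := by simpa [wmap] using hlen
  exact fun hc => h.2 a' ha' b' hb' hlen' (σ.injective hc)

theorem red_wmap (σ : Equiv.Perm ι) (β : ι → MulAut A)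
    (l : List (Ltr (fun _ : ι => A))) :
    red (fun _ : ι => A) (wmap σ β l) = wmap σ β (red (fun _ : ι => A) l) := by
  have h1 : red (fun _ : ι => A) (wmap σ β l)
      = red (fun _ : ι => A) (wmap σ β (red (fun _ : ι => A) l)) := by
    apply red_eq_of_listProd_eq
    rw [← cmap_listProd, ← cmap_listProd, listProd_red]
  rw [h1, red_of_isRed (isRed_wmap σ β (isRed_red l))]

theorem wmap_flatten (σ : Equiv.Perm ι) (β : ι → MulAut A)
    (L : List (List (Ltr (fun _ : ι => A)))) :
    (L.map (wmap σ β)).flatten = wmap σ β L.flatten := by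
  induction L with
  | nil => rfl
  | cons u L ih =>
    simp only [List.map_cons, List.flatten_cons, ih, wmap, List.map_append]

theorem verts_wmap (σ : Equiv.Perm ι) (β : ι → MulAut A)
    (l : List (Ltr (fun _ : ι => A))) :
    verts (fun _ : ι => A) (wmap σ β l) = σ '' verts (fun _ : ι => A) l := by
  ext i
  constructor
  · rintro ⟨x, hx, rfl⟩
    obtain ⟨y, hy, rfl⟩ := List.mem_map.mp hx
    exact ⟨y.1, ⟨y, hy, rfl⟩, rfl⟩
  · rintro ⟨j, ⟨x, hx, rfl⟩, rfl⟩
    exact ⟨lmap σ β x, List.mem_map_of_mem hx, rfl⟩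

theorem isClique_image {s : Set ι} {σ : Equiv.Perm ι} (hσ : σ ∈ graphAut G)
    (hs : G.IsClique s) : G.IsClique (σ '' s) := by
  rintro a ⟨a', ha', rfl⟩ b ⟨b', hb', rfl⟩ hne
  exact hσ.1 a' b' (hs ha' hb' fun hc => hne (by rw [hc]))

theorem mem_wmap {σ : Equiv.Perm ι} (hσ : σ ∈ graphAut G) (β : ι → MulAut A)
    {l : List (Ltr (fun _ : ι => A))} (h : Mem (fun _ : ι => A) G l) :
    Mem (fun _ : ι => A) G (wmap σ β l) := by
  refine ⟨isCycRed_wmap σ β h.1, ?_⟩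
  rw [verts_wmap]
  exact isClique_image hσ h.2

/-- The relabelling map on the carrier of `M(G,H)`. -/
def carFun (σ : Equiv.Perm ι) (hσ : σ ∈ graphAut G) (β : ι → MulAut A)
    (x : Carrier (fun _ : ι => A) G) : Carrier (fun _ : ι => A) G :=
  ⟨wmap σ β x.val, mem_wmap hσ β x.2⟩

theorem inD_map_carFun {σ : Equiv.Perm ι} (hσ : σ ∈ graphAut G) (β : ι → MulAut A)
    {W : List (Carrier (fun _ : ι => A) G)} (hW : W ∈ pgD (fun _ : ι => A) G) :
    W.map (carFun σ hσ β) ∈ pgD (fun _ : ι => A) G := by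
  have hmapmap : (W.map (carFun σ hσ β)).map Subtype.val
      = (W.map Subtype.val).map (wmap σ β) := by
    erw [List.map_map, List.map_map]
    rfl
  show InD (fun _ : ι => A) G _
  rw [hmapmap]
  obtain ⟨h1, h2, h3⟩ := hW
  refine ⟨?_, ?_, ?_⟩
  · intro u hu
    obtain ⟨u', hu', rfl⟩ := List.mem_map.mp hu
    exact mem_wmap hσ β (h1 u' hu')
  · have : {i | ∃ u ∈ (W.map Subtype.val).map (wmap σ β), i ∈ verts (fun _ : ι => A) u}
        = σ '' {i | ∃ u ∈ W.map Subtype.val, i ∈ verts (fun _ : ι => A) u} := by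
      ext i
      constructor
      · rintro ⟨u, hu, hi⟩
        obtain ⟨u', hu', rfl⟩ := List.mem_map.mp hu
        rw [verts_wmap] at hi
        obtain ⟨j, hj, rfl⟩ := hi
        exact ⟨j, ⟨u', hu', hj⟩, rfl⟩
      · rintro ⟨j, ⟨u, hu, hj⟩, rfl⟩
        exact ⟨wmap σ β u, List.mem_map_of_mem hu, by rw [verts_wmap]; exact ⟨j, hj, rfl⟩⟩
    rw [this]
    exact isClique_image hσ h2
  · intro i j hij hj
    rw [List.length_map] at hj
    have := h3 i j hij (by simpa using hj)
    rw [← List.map_drop, ← List.map_take, wmap_flatten, red_wmap]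
    exact isCycRed_wmap σ β this

theorem isHom_carFun {σ : Equiv.Perm ι} (hσ : σ ∈ graphAut G) (β : ι → MulAut A) :
    IsHom (pgD (fun _ : ι => A) G) (pgPi (fun _ : ι => A) G)
      (pgD (fun _ : ι => A) G) (pgPi (fun _ : ι => A) G) (carFun σ hσ β) := by
  refine ⟨fun W hW => inD_map_carFun hσ β hW, fun W hW => ?_⟩
  apply Subtype.ext
  rw [pgPi_val (inD_map_carFun hσ β hW)]
  have hmapmap : (W.map (carFun σ hσ β)).map Subtype.val
      = (W.map Subtype.val).map (wmap σ β) := by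
    erw [List.map_map, List.map_map]
    rfl
  rw [hmapmap, wmap_flatten, red_wmap]
  show _ = wmap σ β (pgPi (fun _ : ι => A) G W).val
  rw [pgPi_val hW]

end Const
/-! ### The map `(β, σ) ↦ M(σ, β)` into `pgAut` -/

section Theta
variable {ι : Type*} [DecidableEq ι] {G : SimpleGraph ι}
  {A : Type*} [Group A] [DecidableEq A]

/-- The relabelling permutation of the carrier. -/
def carPerm (p : ↥(graphAut G)) (β : ι → MulAut A) :
    Equiv.Perm (Carrier (fun _ : ι => A) G) where
  toFun := carFun (p : Equiv.Perm ι) p.2 β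
  invFun := carFun ((p : Equiv.Perm ι)⁻¹) (p⁻¹).2 fun v => (β ((p : Equiv.Perm ι) v))⁻¹
  left_inv x := by
    apply Subtype.ext
    show wmap _ _ (wmap _ _ x.val) = x.val
    rw [wmap_wmap]
    have h1 : ((p : Equiv.Perm ι)⁻¹ * (p : Equiv.Perm ι)) = 1 := inv_mul_cancel _
    have h2 : (fun v => (β ((p : Equiv.Perm ι) v))⁻¹
        * β (((p : Equiv.Perm ι)⁻¹)⁻¹ v)) = fun _ : ι => (1 : MulAut A) := by
      funext v
      rw [inv_inv, inv_mul_cancel]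
    rw [h1, h2, wmap_one]
  right_inv x := by
    apply Subtype.ext
    show wmap _ _ (wmap _ _ x.val) = x.val
    rw [wmap_wmap]
    have h1 : ((p : Equiv.Perm ι) * (p : Equiv.Perm ι)⁻¹) = 1 := mul_inv_cancel _
    have h2 : (fun v => β v * (β ((p : Equiv.Perm ι) ((p : Equiv.Perm ι)⁻¹ v)))⁻¹)
        = fun _ : ι => (1 : MulAut A) := by
      funext v
      rw [Equiv.Perm.inv_def, Equiv.apply_symm_apply, mul_inv_cancel]
    rw [h1, h2, wmap_one]

theorem carPerm_mem_pgAut (p : ↥(graphAut G)) (β : ι → MulAut A) :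
    carPerm p β ∈ pgAut (fun _ : ι => A) G :=
  ⟨isHom_carFun p.2 β, isHom_carFun (p⁻¹).2 _⟩

/-- The coordinate-permuting action on `∀ v, MulAut A`. -/
def permAct (p : ↥(graphAut G)) : MulAut (∀ _ : ι, MulAut A) where
  toFun fs v := fs ((p : Equiv.Perm ι)⁻¹ v)
  invFun fs v := fs ((p : Equiv.Perm ι) v)
  left_inv fs := by
    funext v
    show fs ((p : Equiv.Perm ι)⁻¹ ((p : Equiv.Perm ι) v)) = fs v
    rw [Equiv.Perm.inv_def, Equiv.symm_apply_apply]
  right_inv fs := by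
    funext v
    show fs ((p : Equiv.Perm ι) ((p : Equiv.Perm ι)⁻¹ v)) = fs v
    rw [Equiv.Perm.inv_def, Equiv.apply_symm_apply]
  map_mul' fs gs := rfl

/-- The action as a homomorphism `graphAut G →* MulAut (∀ v, MulAut A)`. -/
def phiAct : ↥(graphAut G) →* MulAut (∀ _ : ι, MulAut A) where
  toFun := permAct
  map_one' := by
    ext fs v
    rfl
  map_mul' p q := by
    ext fs v a
    show (fs ((((p : Equiv.Perm ι)) * ((q : Equiv.Perm ι)))⁻¹ v)) a
      = (fs ((q : Equiv.Perm ι)⁻¹ ((p : Equiv.Perm ι)⁻¹ v))) a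
    rw [mul_inv_rev]
    rfl

/-- The homomorphism `(∏ᵥ Aut A) ⋊ Aut(G) →* pgAut`. -/
noncomputable def Theta :
    SemidirectProduct (∀ _ : ι, MulAut A) ↥(graphAut G) (phiAct (G := G) (A := A))
      →* ↥(pgAut (fun _ : ι => A) G) where
  toFun z := ⟨carPerm z.right z.left, carPerm_mem_pgAut _ _⟩
  map_one' := by
    apply Subtype.ext
    apply Equiv.ext
    intro x
    apply Subtype.ext
    show wmap _ _ x.val = x.val
    have h1 : ((1 : SemidirectProduct (∀ _ : ι, MulAut A) ↥(graphAut G) phiAct).right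
        : Equiv.Perm ι) = 1 := rfl
    have h2 : (1 : SemidirectProduct (∀ _ : ι, MulAut A) ↥(graphAut G) phiAct).left
        = fun _ : ι => (1 : MulAut A) := rfl
    rw [h1, h2, wmap_one]
  map_mul' z w := by
    apply Subtype.ext
    apply Equiv.ext
    intro x
    apply Subtype.ext
    show wmap _ _ x.val = wmap _ _ (wmap _ _ x.val)
    rw [wmap_wmap]
    rfl

theorem Theta_val (z : SemidirectProduct (∀ _ : ι, MulAut A) ↥(graphAut G)
    (phiAct (G := G) (A := A))) (x : Carrier (fun _ : ι => A) G) :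
    (((Theta z : Equiv.Perm (Carrier (fun _ : ι => A) G))) x).val
      = wmap (z.right : Equiv.Perm ι) z.left x.val := rfl

end Theta
/-! ### Splitting a long cyclically reduced word -/

section Split
variable {ι : Type*} {H : ι → Type*} [∀ i, Group (H i)]
  [DecidableEq ι] [∀ i, DecidableEq (H i)] {G : SimpleGraph ι}

theorem mem_of_parts {l : List (Ltr H)} (hl : Mem H G l) {p : List (Ltr H)}
    (hsub : ∀ y ∈ p, y ∈ l) (hred : IsRed H p)
    (hcyc : ∀ a ∈ p.head?, ∀ b ∈ p.getLast?, 2 ≤ p.length → a.1 ≠ b.1) :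
    Mem H G p :=
  ⟨⟨hred, hcyc⟩, hl.2.subset (verts_sub_of_sublist hsub)⟩

theorem exists_split {l : List (Ltr H)} (hl : Mem H G l) (hlen : 2 ≤ l.length) :
    ∃ p q, l = p ++ q ∧ p ≠ [] ∧ q ≠ [] ∧ Mem H G p ∧ Mem H G q := by
  obtain ⟨⟨⟨hne1, hch⟩, hcyc⟩, hcl⟩ := hl
  have hl' : Mem H G l := ⟨⟨⟨hne1, hch⟩, hcyc⟩, hcl⟩
  match l, hl', hne1, hch with
  | [a], _, _, _ => simp at hlen
  | [a, b], hl', hne1, hch =>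
    refine ⟨[a], [b], by simp, by simp, by simp, ?_, ?_⟩
    · exact mem_of_parts hl' (by simp)
        ⟨by simpa using hne1 a (by simp), by simp [List.Chain']⟩ (by simp)
    · exact mem_of_parts hl' (by simp)
        ⟨by simpa using hne1 b (by simp), by simp [List.Chain']⟩ (by simp)
  | a :: b :: d :: t, hl', hne1, hch =>
    have hab : a.1 ≠ b.1 := (List.isChain_cons_cons.mp hch).1
    have hbd : b.1 ≠ d.1 := (List.isChain_cons_cons.mp (List.isChain_cons_cons.mp hch).2).1
    set c := (d :: t).getLast (by simp) with hc
    by_cases hbc : b.1 = c.1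
    · -- split as [a, b] ++ (d :: t)
      refine ⟨[a, b], d :: t, by simp, by simp, by simp, ?_, ?_⟩
      · refine mem_of_parts hl' ?_ ?_ ?_
        · intro y hy
          simp only [List.mem_cons, List.mem_singleton] at hy
          rcases hy with rfl | hy
          · exact List.mem_cons_self
          · rcases hy with rfl | hy
            · exact List.mem_cons_of_mem _ (List.mem_cons_self)
            · simp at hy
        · refine ⟨?_, by simpa [List.Chain'] using hab⟩
          intro x hx
          simp only [List.mem_cons, List.mem_singleton] at hx
          rcases hx with rfl | hx
          · exact hne1 x (by simp)
          · rcases hx with rfl | hx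
            · exact hne1 x (by simp)
            · simp at hx
        · intro x hx y hy _
          simp only [List.head?_cons, Option.mem_def, Option.some.injEq] at hx
          have hlast2 : ([a, b] : List (Ltr H)).getLast? = some b := rfl
          rw [hlast2] at hy
          simp only [Option.mem_def, Option.some.injEq] at hy
          rw [← hx, ← hy]
          exact hab
      · refine mem_of_parts hl'
          (fun y hy => List.mem_cons_of_mem a (List.mem_cons_of_mem b hy)) ?_ ?_
        · exact ⟨fun x hx =>
            hne1 x (List.mem_cons_of_mem a (List.mem_cons_of_mem b hx)), hch.tail.tail⟩
        · intro x hx y hy _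
          simp only [List.head?_cons, Option.mem_def, Option.some.injEq] at hx
          rw [List.getLast?_eq_getLast (l := d :: t) (by simp)] at hy
          simp only [Option.mem_def, Option.some.injEq] at hy
          rw [← hx, ← hy, ← hc]
          exact fun hdc => hbd (hbc.trans hdc.symm)
    · -- split as [a] ++ (b :: d :: t)
      refine ⟨[a], b :: d :: t, by simp, by simp, by simp, ?_, ?_⟩
      · exact mem_of_parts hl' (by simp)
          ⟨by simpa using hne1 a (by simp), by simp [List.Chain']⟩ (by simp)
      · refine mem_of_parts hl' (fun y hy => List.mem_cons_of_mem a hy) ?_ ?_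
        · exact ⟨fun x hx => hne1 x (List.mem_cons_of_mem a hx), hch.tail⟩
        · intro x hx y hy _
          simp only [List.head?_cons, Option.mem_def, Option.some.injEq] at hx
          have hy' : (b :: d :: t).getLast? = some c := by
            rw [List.getLast?_cons_cons, List.getLast?_eq_getLast (l := d :: t) (by simp)]
          rw [hy'] at hy
          simp only [Option.mem_def, Option.some.injEq] at hy
          rw [← hx, ← hy]
          exact hbc

end Split
/-! ### Extraction: every automorphism is a relabelling -/

section Extract
variable {ι : Type*} [DecidableEq ι] {G : SimpleGraph ι}
  {A : Type*} [Group A] [DecidableEq A]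

theorem ltr_mk_eq_iff {v w : ι} {h k : A} :
    (⟨v, h⟩ : Ltr (fun _ : ι => A)) = ⟨w, k⟩ ↔ v = w ∧ h = k := by
  constructor
  · intro he
    obtain ⟨h1, h2⟩ := Sigma.mk.inj_iff.mp he
    subst h1
    exact ⟨rfl, eq_of_heq h2⟩
  · rintro ⟨rfl, rfl⟩
    rfl

theorem isClique_of_forall_eq {s : Set ι} (v : ι) (hs : ∀ a ∈ s, a = v) :
    G.IsClique s := fun a ha b hb hne => absurd ((hs a ha).trans (hs b hb).symm) hne

theorem red_pair_same {H : ι → Type*} [∀ i, Group (H i)] [∀ i, DecidableEq (H i)]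
    {i : ι} (g g' : H i) :
    red H [⟨i, g⟩, ⟨i, g'⟩] = if g * g' = 1 then [] else [⟨i, g * g'⟩] := by
  rw [red_eq_of_listProd_eq (l' := [⟨i, g * g'⟩])
    (by simp [listProd_cons, listProd_nil, map_mul]), red_single]

/-- Abbreviation for the singleton elements of the carrier. -/
def sing (v : ι) (h : A) (hne : h ≠ 1) : Carrier (fun _ : ι => A) G :=
  ⟨[⟨v, h⟩], mem_single (fun _ : ι => A) G v h hne⟩

theorem inD_pair_same (v : ι) (h h' : A) (hne : h ≠ 1) (hne' : h' ≠ 1) :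
    [sing (G := G) v h hne, sing v h' hne'] ∈ pgD (fun _ : ι => A) G := by
  apply inD_pair
  · show IsCycRed (fun _ : ι => A) (red (fun _ : ι => A) [⟨v, h⟩, ⟨v, h'⟩])
    rw [red_pair_same]
    exact isCycRed_ite _
  · show G.IsClique (verts (fun _ : ι => A) [⟨v, h⟩, ⟨v, h'⟩])
    apply isClique_of_forall_eq v
    rintro a ⟨x, hx, rfl⟩
    simp only [List.mem_cons, List.mem_singleton, List.not_mem_nil, or_false] at hx
    rcases hx with rfl | rfl <;> rfl

theorem pgPi_pair_same_val (v : ι) (h h' : A) (hne : h ≠ 1) (hne' : h' ≠ 1) :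
    (pgPi (fun _ : ι => A) G [sing v h hne, sing v h' hne']).val
      = if h * h' = 1 then [] else [⟨v, h * h'⟩] := by
  rw [pgPi_val (inD_pair_same v h h' hne hne')]
  show red (fun _ : ι => A) ([[⟨v, h⟩], [⟨v, h'⟩]] : List (List (Ltr (fun _ : ι => A)))).flatten = _
  rw [show ([[⟨v, h⟩], [⟨v, h'⟩]] : List (List (Ltr (fun _ : ι => A)))).flatten
    = [⟨v, h⟩, ⟨v, h'⟩] by simp, red_pair_same]

variable (f : Equiv.Perm (Carrier (fun _ : ι => A) G))
  (hf1 : IsHom (pgD (fun _ : ι => A) G) (pgPi (fun _ : ι => A) G)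
    (pgD (fun _ : ι => A) G) (pgPi (fun _ : ι => A) G) f)

include hf1

theorem f_one : f (one (fun _ : ι => A) G) = one (fun _ : ι => A) G := by
  have := hf1.2 [] pgD_nil
  rw [List.map_nil, pgPi_nil] at this
  exact this.symm

variable [Finite A]

theorem single_image (v : ι) (h : A) (hne : h ≠ 1) :
    ∃ (w : ι) (k : A), k ≠ 1 ∧ (f (sing v h hne)).val = [⟨w, k⟩] := by
  set y := f (sing (G := G) v h hne) with hy
  have hne0 : y.val ≠ [] := by
    intro hnil
    have : y = one (fun _ : ι => A) G := Subtype.ext hnil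
    rw [hy, ← f_one f hf1] at this
    have := f.injective this
    have : ([⟨v, h⟩] : List (Ltr (fun _ : ι => A))) = [] := congrArg Subtype.val this
    simp at this
  have hlen : y.val.length ≤ 1 := by
    by_contra hgt
    push_neg at hgt
    -- torsion argument
    set n := orderOf h with hn
    have hnpos : 0 < n := orderOf_pos h
    have hpow : h ^ n = 1 := pow_orderOf_eq_one h
    have hrep := inD_replicate (H := fun _ : ι => A) (G := G) v h hne n
    have h1 := hf1.2 _ hrep
    erw [pgPi_replicate_eq_one (H := fun _ : ι => A) (G := G) v h hne hpow, f_one f hf1, List.map_replicate] at h1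
    have h2 := hf1.1 _ hrep
    erw [List.map_replicate] at h2
    have hY : f (⟨[⟨v, h⟩], mem_single (fun _ : ι => A) G v h hne⟩
        : Carrier (fun _ : ι => A) G) = y := rfl
    rw [hY] at h1 h2
    have h3 : (pgPi (fun _ : ι => A) G (List.replicate n y)).val = [] := by
      rw [h1]; rfl
    erw [pgPi_val h2, List.map_replicate] at h3
    have hred : IsRed (fun _ : ι => A) ((List.replicate n y.val).flatten) :=
      isRed_flatten_replicate y.2.1 hgt n
    rw [red_of_isRed hred] at h3
    obtain ⟨m, hm⟩ := Nat.exists_eq_succ_of_ne_zero (Nat.pos_iff_ne_zero.mp hnpos)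
    rw [hm, List.replicate_succ, List.flatten_cons, List.append_eq_nil_iff] at h3
    rw [h3.1] at hgt
    simp at hgt
  match hv : y.val, hlen, hne0 with
  | [], _, h0 => exact absurd rfl h0
  | [a], _, _ =>
    refine ⟨a.1, a.2, ?_, by rw [Sigma.eta]⟩
    exact y.2.1.1.1 a (by rw [hv]; simp)

theorem pair_rule (v : ι) (h h' : A) (hne : h ≠ 1) (hne' : h' ≠ 1)
    {w w' : ι} {k k' : A} (hkne : k ≠ 1) (hk'ne : k' ≠ 1)
    (hk : (f (sing v h hne)).val = [⟨w, k⟩])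
    (hk' : (f (sing v h' hne')).val = [⟨w', k'⟩]) :
    w = w' ∧ (h * h' = 1 → k * k' = 1) ∧
      ∀ hne'' : h * h' ≠ 1, (f (sing v (h * h') hne'')).val = [⟨w, k * k'⟩] := by
  have hD := inD_pair_same (G := G) v h h' hne hne'
  have him := hf1.1 _ hD
  have heq := hf1.2 _ hD
  rw [List.map_cons, List.map_cons, List.map_nil] at him heq
  have hval : (f (pgPi (fun _ : ι => A) G [sing v h hne, sing v h' hne'])).val
      = red (fun _ : ι => A) [⟨w, k⟩, ⟨w', k'⟩] := by
    rw [← heq, pgPi_val him]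
    congr 1
    erw [List.map_cons, List.map_cons, List.map_nil, hk, hk']
    simp
  have hww : w = w' := by
    by_contra hww
    rw [red_of_isRed ⟨by simp [hkne, hk'ne], by simpa [List.Chain'] using hww⟩] at hval
    by_cases hcc : h * h' = 1
    · have : pgPi (fun _ : ι => A) G [sing v h hne, sing v h' hne']
          = one (fun _ : ι => A) G := by
        apply Subtype.ext
        rw [pgPi_pair_same_val v h h' hne hne', if_pos hcc]
        rfl
      rw [this, f_one f hf1] at hval
      simp [one] at hval
    · have : pgPi (fun _ : ι => A) G [sing v h hne, sing v h' hne']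
          = sing v (h * h') hcc := by
        apply Subtype.ext
        rw [pgPi_pair_same_val v h h' hne hne', if_neg hcc]
        rfl
      rw [this] at hval
      obtain ⟨w'', k'', hk''ne, hval''⟩ := single_image f hf1 v (h * h') hcc
      rw [hval''] at hval
      simp at hval
  subst hww
  rw [red_pair_same] at hval
  refine ⟨rfl, ?_, ?_⟩
  · intro hcc
    have : pgPi (fun _ : ι => A) G [sing v h hne, sing v h' hne']
        = one (fun _ : ι => A) G := by
      apply Subtype.ext
      rw [pgPi_pair_same_val v h h' hne hne', if_pos hcc]
      rfl
    rw [this, f_one f hf1] at hval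
    by_contra hkk
    rw [if_neg hkk] at hval
    have : ([] : List (Ltr (fun _ : ι => A))) = [⟨w, k * k'⟩] := hval
    simp at this
  · intro hne''
    have : pgPi (fun _ : ι => A) G [sing v h hne, sing v h' hne']
        = sing v (h * h') hne'' := by
      apply Subtype.ext
      rw [pgPi_pair_same_val v h h' hne hne', if_neg hne'']
      rfl
    rw [this] at hval
    by_cases hkk : k * k' = 1
    · rw [if_pos hkk] at hval
      obtain ⟨w'', k'', hk''ne, hval''⟩ := single_image f hf1 v (h * h') hne''
      rw [hval''] at hval
      simp at hval
    · rw [if_neg hkk] at hval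
      exact hval

theorem adj_image (v w : ι) (hvw : G.Adj v w) (h h' : A) (hne : h ≠ 1)
    (hne' : h' ≠ 1) {a a' : ι} {k k' : A}
    (hk : (f (sing v h hne)).val = [⟨a, k⟩])
    (hk' : (f (sing w h' hne')).val = [⟨a', k'⟩]) (hane : a ≠ a') : G.Adj a a' := by
  have hvw' : v ≠ w := hvw.ne
  have hD : [sing (G := G) v h hne, sing w h' hne'] ∈ pgD (fun _ : ι => A) G := by
    apply inD_pair
    · show IsCycRed (fun _ : ι => A) (red (fun _ : ι => A) [⟨v, h⟩, ⟨w, h'⟩])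
      rw [red_of_isRed ⟨by simp [hne, hne'], by simpa [List.Chain'] using hvw'⟩]
      refine ⟨⟨by simp [hne, hne'], by simpa [List.Chain'] using hvw'⟩, ?_⟩
      intro p hp q hq _
      simp only [List.head?_cons, Option.mem_def, Option.some.injEq] at hp
      have : ([⟨v, h⟩, ⟨w, h'⟩] : List (Ltr (fun _ : ι => A))).getLast? = some ⟨w, h'⟩ := rfl
      rw [this] at hq
      simp only [Option.mem_def, Option.some.injEq] at hq
      rw [← hp, ← hq]
      exact hvw'
    · show G.IsClique (verts (fun _ : ι => A) [⟨v, h⟩, ⟨w, h'⟩])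
      rintro p ⟨x, hx, rfl⟩ q ⟨z, hz, rfl⟩ hne2
      simp only [List.mem_cons, List.mem_singleton, List.not_mem_nil, or_false] at hx hz
      rcases hx with rfl | rfl <;> rcases hz with rfl | rfl
      · exact absurd rfl hne2
      · exact hvw
      · exact hvw.symm
      · exact absurd rfl hne2
  have him := hf1.1 _ hD
  rw [List.map_cons, List.map_cons, List.map_nil] at him
  have hcl := him.2.1
  have hmem1 : a ∈ {i | ∃ u ∈ List.map Subtype.val
      [f (sing (G := G) v h hne), f (sing w h' hne')], i ∈ verts (fun _ : ι => A) u} := by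
    refine ⟨(f (sing v h hne)).val, ?_, ⟨⟨a, k⟩, by rw [hk]; simp, rfl⟩⟩
    exact List.mem_map_of_mem List.mem_cons_self
  have hmem2 : a' ∈ {i | ∃ u ∈ List.map Subtype.val
      [f (sing (G := G) v h hne), f (sing w h' hne')], i ∈ verts (fun _ : ι => A) u} := by
    refine ⟨(f (sing w h' hne')).val, ?_, ⟨⟨a', k'⟩, by rw [hk']; simp, rfl⟩⟩
    exact List.mem_map_of_mem (List.mem_cons_of_mem _ List.mem_cons_self)
  exact hcl hmem1 hmem2 hane

end Extract
/-! ### Main extraction theorem -/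

section Main
variable {ι : Type*} [DecidableEq ι] {G : SimpleGraph ι}
  {A : Type*} [Group A] [DecidableEq A] [Nontrivial A] [Finite A]

theorem exists_carPerm_eq (f : Equiv.Perm (Carrier (fun _ : ι => A) G))
    (hf : f ∈ pgAut (fun _ : ι => A) G) :
    ∃ (p : ↥(graphAut G)) (β : ι → MulAut A), f = carPerm p β := by
  obtain ⟨hf1, hf2⟩ := hf
  choose W K hKne hW using single_image f hf1
  choose W' K' hK'ne hW' using single_image f.symm hf2
  have hWd : ∀ v (h h' : A) (hne : h ≠ 1) (hne' : h' ≠ 1),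
      W v h hne = W v h' hne' := fun v h h' hne hne' =>
    (pair_rule f hf1 v h h' hne hne' (hKne v h hne) (hKne v h' hne')
      (hW v h hne) (hW v h' hne')).1
  have hW'd : ∀ v (h h' : A) (hne : h ≠ 1) (hne' : h' ≠ 1),
      W' v h hne = W' v h' hne' := fun v h h' hne hne' =>
    (pair_rule f.symm hf2 v h h' hne hne' (hK'ne v h hne) (hK'ne v h' hne')
      (hW' v h hne) (hW' v h' hne')).1
  have hfs : ∀ v (h : A) (hne : h ≠ 1),
      f (sing v h hne) = sing (W v h hne) (K v h hne) (hKne v h hne) :=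
    fun v h hne => Subtype.ext (hW v h hne)
  have hfs' : ∀ v (h : A) (hne : h ≠ 1),
      f.symm (sing v h hne) = sing (W' v h hne) (K' v h hne) (hK'ne v h hne) :=
    fun v h hne => Subtype.ext (hW' v h hne)
  have hsymm : ∀ v (h : A) (hne : h ≠ 1),
      W' (W v h hne) (K v h hne) (hKne v h hne) = v
        ∧ K' (W v h hne) (K v h hne) (hKne v h hne) = h := by
    intro v h hne
    have h1 : f.symm (sing (W v h hne) (K v h hne) (hKne v h hne)) = sing v h hne := by
      rw [← hfs v h hne, Equiv.symm_apply_apply]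
    rw [hfs' (W v h hne) (K v h hne) (hKne v h hne)] at h1
    have h2 : ([⟨W' (W v h hne) (K v h hne) (hKne v h hne),
        K' (W v h hne) (K v h hne) (hKne v h hne)⟩] : List (Ltr (fun _ : ι => A)))
        = [⟨v, h⟩] := congrArg Subtype.val h1
    have h3 := ltr_mk_eq_iff.mp (by simpa using h2)
    exact h3
  have hsymm' : ∀ v (h : A) (hne : h ≠ 1),
      W (W' v h hne) (K' v h hne) (hK'ne v h hne) = v
        ∧ K (W' v h hne) (K' v h hne) (hK'ne v h hne) = h := by
    intro v h hne
    have h1 : f (sing (W' v h hne) (K' v h hne) (hK'ne v h hne)) = sing v h hne := by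
      rw [← hfs' v h hne, Equiv.apply_symm_apply]
    rw [hfs (W' v h hne) (K' v h hne) (hK'ne v h hne)] at h1
    have h2 : ([⟨W (W' v h hne) (K' v h hne) (hK'ne v h hne),
        K (W' v h hne) (K' v h hne) (hK'ne v h hne)⟩] : List (Ltr (fun _ : ι => A)))
        = [⟨v, h⟩] := congrArg Subtype.val h1
    exact ltr_mk_eq_iff.mp (by simpa using h2)
  obtain ⟨h₀, h₀ne⟩ := exists_ne (1 : A)
  set σ₀ : ι → ι := fun v => W v h₀ h₀ne with hσ₀
  set σ₀' : ι → ι := fun v => W' v h₀ h₀ne with hσ₀'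
  have hli : Function.LeftInverse σ₀' σ₀ := by
    intro v
    show W' (W v h₀ h₀ne) h₀ h₀ne = v
    rw [hW'd (W v h₀ h₀ne) h₀ (K v h₀ h₀ne) h₀ne (hKne v h₀ h₀ne)]
    exact (hsymm v h₀ h₀ne).1
  have hri : Function.RightInverse σ₀' σ₀ := by
    intro v
    show W (W' v h₀ h₀ne) h₀ h₀ne = v
    rw [hWd (W' v h₀ h₀ne) h₀ (K' v h₀ h₀ne) h₀ne (hK'ne v h₀ h₀ne)]
    exact (hsymm' v h₀ h₀ne).1
  set σ : Equiv.Perm ι := ⟨σ₀, σ₀', hli, hri⟩ with hσdef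
  have hinj : Function.Injective σ₀ := hli.injective
  have hinj' : Function.Injective σ₀' := hri.injective
  have hadj : ∀ a b, G.Adj a b → G.Adj (σ₀ a) (σ₀ b) := by
    intro a b hab
    exact adj_image f hf1 a b hab h₀ h₀ h₀ne h₀ne (hW a h₀ h₀ne) (hW b h₀ h₀ne)
      fun hcc => hab.ne (hinj hcc)
  have hadj' : ∀ a b, G.Adj a b → G.Adj (σ₀' a) (σ₀' b) := by
    intro a b hab
    exact adj_image f.symm hf2 a b hab h₀ h₀ h₀ne h₀ne (hW' a h₀ h₀ne) (hW' b h₀ h₀ne)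
      fun hcc => hab.ne (hinj' hcc)
  have hσ : σ ∈ graphAut G := ⟨hadj, hadj'⟩
  -- multiplicativity data
  have hmul1 : ∀ v (h h' : A) (hne : h ≠ 1) (hne' : h' ≠ 1), h * h' = 1 →
      K v h hne * K v h' hne' = 1 := fun v h h' hne hne' =>
    (pair_rule f hf1 v h h' hne hne' (hKne v h hne) (hKne v h' hne')
      (hW v h hne) (hW v h' hne')).2.1
  have hmul2 : ∀ v (h h' : A) (hne : h ≠ 1) (hne' : h' ≠ 1) (hne'' : h * h' ≠ 1),
      K v (h * h') hne'' = K v h hne * K v h' hne' := by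
    intro v h h' hne hne' hne''
    have h3 := (pair_rule f hf1 v h h' hne hne' (hKne v h hne) (hKne v h' hne')
      (hW v h hne) (hW v h' hne')).2.2 hne''
    have h4 := hW v (h * h') hne''
    rw [h3] at h4
    exact ((ltr_mk_eq_iff.mp (by simpa using h4)).2).symm
  set b0 : ι → A → A := fun v h => if hne : h = 1 then 1 else K v h hne with hb0
  set b0' : ι → A → A := fun v h => if hne : h = 1 then 1 else K' v h hne with hb0'
  have hb0ne : ∀ v (h : A) (hne : h ≠ 1), b0 v h = K v h hne := by
    intro v h hne
    rw [hb0]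
    exact dif_neg hne
  have hb0'ne : ∀ v (h : A) (hne : h ≠ 1), b0' v h = K' v h hne := by
    intro v h hne
    rw [hb0']
    exact dif_neg hne
  have hbmul : ∀ v (h h' : A), b0 v (h * h') = b0 v h * b0 v h' := by
    intro v h h'
    by_cases hh : h = 1
    · subst hh
      rw [one_mul, show b0 v 1 = 1 from dif_pos rfl, one_mul]
    by_cases hh' : h' = 1
    · subst hh'
      rw [mul_one, show b0 v 1 = 1 from dif_pos rfl, mul_one]
    rw [hb0ne v h hh, hb0ne v h' hh']
    by_cases hcc : h * h' = 1
    · rw [show b0 v (h * h') = 1 from dif_pos hcc]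
      exact (hmul1 v h h' hh hh' hcc).symm
    · rw [hb0ne v (h * h') hcc]
      exact hmul2 v h h' hh hh' hcc
  have hbleft : ∀ v (h : A), b0' (σ₀ v) (b0 v h) = h := by
    intro v h
    by_cases hh : h = 1
    · subst hh
      rw [show b0 v 1 = 1 from dif_pos rfl]
      exact dif_pos rfl
    · rw [hb0ne v h hh, hb0'ne (σ₀ v) (K v h hh) (hKne v h hh)]
      show K' (W v h₀ h₀ne) (K v h hh) (hKne v h hh) = h
      rw [hWd v h₀ h h₀ne hh]
      exact (hsymm v h hh).2
  have hbright : ∀ v (h : A), b0 v (b0' (σ₀ v) h) = h := by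
    intro v h
    by_cases hh : h = 1
    · subst hh
      rw [show b0' (σ₀ v) 1 = 1 from dif_pos rfl]
      exact dif_pos rfl
    · rw [hb0'ne (σ₀ v) h hh, hb0ne v (K' (σ₀ v) h hh) (hK'ne (σ₀ v) h hh)]
      have e1 : W' (σ₀ v) h hh = v := by
        show W' (W v h₀ h₀ne) h hh = v
        rw [hW'd (W v h₀ h₀ne) h (K v h₀ h₀ne) hh (hKne v h₀ h₀ne)]
        exact (hsymm v h₀ h₀ne).1
      have := (hsymm' (σ₀ v) h hh).2
      rw [e1] at this
      exact this
  set β : ι → MulAut A := fun w =>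
    { toFun := b0 (σ₀' w), invFun := b0' (σ₀ (σ₀' w)),
      left_inv := fun h => hbleft (σ₀' w) h,
      right_inv := fun h => hbright (σ₀' w) h,
      map_mul' := fun h h' => hbmul (σ₀' w) h h' } with hβ
  refine ⟨⟨σ, hσ⟩, β, ?_⟩
  have hβapp : ∀ v (h : A), β (σ₀ v) h = b0 v h := by
    intro v h
    show b0 (σ₀' (σ₀ v)) h = b0 v h
    rw [hli v]
  have main : ∀ (n : ℕ) (x : Carrier (fun _ : ι => A) G), x.val.length ≤ n →
      f x = carFun σ hσ β x := by
    intro n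
    induction n with
    | zero =>
      intro x hx
      have hnil : x.val = [] := List.length_eq_zero_iff.mp (Nat.le_zero.mp hx)
      have hx1 : x = one (fun _ : ι => A) G := Subtype.ext hnil
      rw [hx1, f_one f hf1]
      apply Subtype.ext
      show (one (fun _ : ι => A) G).val = wmap σ β (one (fun _ : ι => A) G).val
      rfl
    | succ n ih =>
      intro x hx
      rcases Nat.lt_or_ge x.val.length (n + 1) with hlt | hge
      · exact ih x (Nat.lt_succ_iff.mp hlt)
      have hlen : x.val.length = n + 1 := le_antisymm hx hge
      rcases Nat.lt_or_ge x.val.length 2 with h2 | h2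
      · -- length 1
        have h1 : x.val.length = 1 := by omega
        obtain ⟨a, ha⟩ := List.length_eq_one_iff.mp h1
        have hane : a.2 ≠ 1 := x.2.1.1.1 a (by rw [ha]; simp)
        have hxe : x = sing a.1 a.2 hane := by
          apply Subtype.ext
          rw [ha]
          show [a] = [(⟨a.1, a.2⟩ : Ltr (fun _ : ι => A))]
          rw [Sigma.eta]
        rw [hxe, hfs a.1 a.2 hane]
        apply Subtype.ext
        show [(⟨W a.1 a.2 hane, K a.1 a.2 hane⟩ : Ltr (fun _ : ι => A))]
          = wmap σ β [⟨a.1, a.2⟩]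
        have : wmap σ β [⟨a.1, a.2⟩] = [⟨σ₀ a.1, β (σ₀ a.1) a.2⟩] := rfl
        rw [this, hβapp a.1 a.2, hb0ne a.1 a.2 hane]
        congr 1
        apply ltr_mk_eq_iff.mpr
        exact ⟨hWd a.1 a.2 h₀ hane h₀ne, rfl⟩
      · -- length ≥ 2
        obtain ⟨p, q, hpq, hp0, hq0, hpmem, hqmem⟩ := exists_split x.2 h2
        set X : Carrier (fun _ : ι => A) G := ⟨p, hpmem⟩ with hX
        set Y : Carrier (fun _ : ι => A) G := ⟨q, hqmem⟩ with hY
        have hD : [X, Y] ∈ pgD (fun _ : ι => A) G := by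
          apply inD_pair
          · show IsCycRed (fun _ : ι => A) (red (fun _ : ι => A) (p ++ q))
            rw [← hpq, red_of_isRed x.2.1.1]
            exact x.2.1
          · show G.IsClique (verts (fun _ : ι => A) (p ++ q))
            rw [← hpq]
            exact x.2.2
        have hPi : pgPi (fun _ : ι => A) G [X, Y] = x := by
          apply Subtype.ext
          rw [pgPi_val hD]
          show red (fun _ : ι => A) ([p, q] : List (List (Ltr (fun _ : ι => A)))).flatten = _
          rw [show ([p, q] : List (List (Ltr (fun _ : ι => A)))).flatten = p ++ q by simp,
            ← hpq, red_of_isRed x.2.1.1]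
        have hplen : p.length ≤ n := by
          have := congrArg List.length hpq
          rw [List.length_append] at this
          have hq1 : 1 ≤ q.length := List.length_pos_iff.mpr hq0
          omega
        have hqlen : q.length ≤ n := by
          have := congrArg List.length hpq
          rw [List.length_append] at this
          have hp1 : 1 ≤ p.length := List.length_pos_iff.mpr hp0
          omega
        have heq1 := hf1.2 [X, Y] hD
        rw [List.map_cons, List.map_cons, List.map_nil, hPi] at heq1
        have heq2 := (isHom_carFun hσ β).2 [X, Y] hD
        rw [List.map_cons, List.map_cons, List.map_nil, hPi] at heq2
        rw [← heq1, ih X hplen, ih Y hqlen, heq2]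
  exact Equiv.ext fun x => main x.val.length x le_rfl

end Main
/-! ### Final assembly -/

section Final
variable {ι : Type*} [DecidableEq ι] {G : SimpleGraph ι}
  {A : Type*} [Group A] [DecidableEq A] [Nontrivial A] [Finite A]

theorem Theta_injective : Function.Injective (Theta (G := G) (A := A)) := by
  rw [injective_iff_map_eq_one]
  intro z hz
  have hz' : carPerm z.right z.left = 1 := congrArg Subtype.val hz
  have happ : ∀ x : Carrier (fun _ : ι => A) G,
      carFun ((z.right : Equiv.Perm ι)) z.right.2 z.left x = x := by
    intro x
    rw [show carFun ((z.right : Equiv.Perm ι)) z.right.2 z.left x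
      = carPerm z.right z.left x from rfl, hz']
    rfl
  obtain ⟨h₀, h₀ne⟩ := exists_ne (1 : A)
  have hvert : ∀ (v : ι) (h : A) (hne : h ≠ 1),
      (z.right : Equiv.Perm ι) v = v ∧ z.left ((z.right : Equiv.Perm ι) v) h = h := by
    intro v h hne
    have := congrArg Subtype.val (happ (sing v h hne))
    have h2 : ([(⟨(z.right : Equiv.Perm ι) v,
        z.left ((z.right : Equiv.Perm ι) v) h⟩ : Ltr (fun _ : ι => A))])
        = [(⟨v, h⟩ : Ltr (fun _ : ι => A))] := this
    exact ltr_mk_eq_iff.mp (by simpa using h2)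
  have hr : z.right = 1 := by
    apply Subtype.ext
    apply Equiv.ext
    intro v
    exact (hvert v h₀ h₀ne).1
  have hl : z.left = 1 := by
    funext v
    apply MulEquiv.ext
    intro h
    by_cases hh : h = 1
    · subst hh
      rw [map_one]
      rfl
    · have := (hvert v h hh).2
      rw [(hvert v h₀ h₀ne).1] at this
      exact this
  rcases z with ⟨l, r⟩
  have : l = 1 := hl
  have hr2 : r = 1 := hr
  rw [this, hr2]
  rfl

theorem Theta_surjective : Function.Surjective (Theta (G := G) (A := A)) := by
  rintro ⟨f, hf⟩
  obtain ⟨p, β, rfl⟩ := exists_carPerm_eq f hf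
  exact ⟨⟨β, p⟩, Subtype.ext rfl⟩

end Final
/-- When all vertices are decorated by the same nontrivial finite group `A`,
the assignment `σ ↦ M(σ, {id_A})` is an injective group homomorphism
`s : Aut_Graphs(G) → Aut_Part(M(G,H))` which is a section of `Ψ`; in particular `Ψ` is
surjective, and `Aut_Part(M(G,H)) ≅ (∏ᵥ Aut A) ⋊ Aut_Graphs(G)` with the permutation
action `σ · (f_v)ᵥ = (f_{σ⁻¹ v})ᵥ`. -/
theorem statement5 {ι : Type*} [DecidableEq ι] (G : SimpleGraph ι)
    (A : Type*) [Group A] [DecidableEq A] [Nontrivial A] [Finite A] :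
    ∃ s : ↥(graphAut G) →* ↥(pgAut (fun _ : ι => A) G),
      -- `s σ` is the letterwise relabelling of vertices along `σ`
      (∀ (σ : ↥(graphAut G)) (x : Carrier (fun _ : ι => A) G),
        ((s σ : Equiv.Perm (Carrier (fun _ : ι => A) G)) x).val
          = x.val.map fun p => ⟨(σ : Equiv.Perm ι) p.1, p.2⟩) ∧
      -- `s` is an injective group homomorphism
      Function.Injective s ∧
      -- `s` is a section of `Ψ`: `s σ` covers `σ`
      (∀ σ : ↥(graphAut G),
        CoversVia (fun _ : ι => A) G
          ((s σ : Equiv.Perm (Carrier (fun _ : ι => A) G)) :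
            Carrier (fun _ : ι => A) G → Carrier (fun _ : ι => A) G)
          ((σ : Equiv.Perm ι) : ι → ι)) ∧
      -- in particular `Ψ` is surjective
      (∀ σ : Equiv.Perm ι, σ ∈ graphAut G →
        ∃ f ∈ pgAut (fun _ : ι => A) G,
          CoversVia (fun _ : ι => A) G (f : Carrier (fun _ : ι => A) G → Carrier (fun _ : ι => A) G)
            (σ : ι → ι)) ∧
      -- the semidirect product decomposition for the coordinate-permuting action
      ∃ φ : ↥(graphAut G) →* MulAut (∀ _ : ι, MulAut A),
        (∀ (σ : ↥(graphAut G)) (fs : ∀ _ : ι, MulAut A) (v : ι),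
          (φ σ fs) v = fs (((σ : Equiv.Perm ι))⁻¹ v)) ∧
        Nonempty (↥(pgAut (fun _ : ι => A) G) ≃*
          SemidirectProduct (∀ _ : ι, MulAut A) ↥(graphAut G) φ) := by
  classical
  refine ⟨(Theta (G := G) (A := A)).comp SemidirectProduct.inr, ?_, ?_, ?_, ?_,
    phiAct, fun σ fs v => rfl,
    ⟨(MulEquiv.ofBijective (Theta (G := G) (A := A))
      ⟨Theta_injective, Theta_surjective⟩).symm⟩⟩
  · intro σ x
    rfl
  · intro σ τ hst
    exact SemidirectProduct.inr_injective (Theta_injective hst)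
  · intro σ v h hne
    exact ⟨h, hne, rfl⟩
  · intro σ hσ
    refine ⟨(Theta (G := G) (A := A)).comp SemidirectProduct.inr ⟨σ, hσ⟩,
      ((Theta (G := G) (A := A)).comp SemidirectProduct.inr ⟨σ, hσ⟩).2, ?_⟩
    intro v h hne
    exact ⟨h, hne, rfl⟩

end PaperPG
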